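/- arXiv:1710.08898 — 2 statements merged into one kernel-verified Lean document; each statement's English description precedes it below -/
import Mathlib

section
/- For the steady 1D linear advection-diffusion problem, τ_mod and τ_opt agree asymptotically in both limits: τ_mod/τ_opt → 1 as Pe → ∞, and as Pe → 0⁺, τ_opt ~ (h/(2|u|))·(Pe/3) = h²/(12k) and τ_mod → h²/(12k), so τ_mod/τ_opt → 1. -/
open Filter


lemma sinh_div_self_tendsto : Tendsto (fun x : ℝ => Real.sinh x / x) (nhdsWithin 0 (Set.Ioi 0)) (nhds 1) := by
  have h := hasDerivAt_iff_tendsto_slope.mp (Real.hasDerivAt_sinh 0)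
  rw [Real.cosh_zero] at h
  have h2 : Tendsto (slope Real.sinh 0) (nhdsWithin 0 (Set.Ioi 0)) (nhds 1) :=
    h.mono_left (nhdsWithin_mono _ (by intro x hx; simpa using ne_of_gt hx))
  refine h2.congr fun x => ?_
  simp [slope_def_field]

lemma coth_sub_inv_div_tendsto :
    Tendsto (fun x : ℝ => (Real.cosh x / Real.sinh x - 1 / x) / x)
      (nhdsWithin 0 (Set.Ioi 0)) (nhds (1/3)) := by
  set f : ℝ → ℝ := fun x => x * Real.cosh x - Real.sinh x
  set g : ℝ → ℝ := fun x => x ^ 2 * Real.sinh x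
  have hff' : ∀ x ∈ Set.Ioo (0:ℝ) 1, HasDerivAt f (x * Real.sinh x) x := by
    intro x _
    have := ((hasDerivAt_id x).mul (Real.hasDerivAt_cosh x)).sub (Real.hasDerivAt_sinh x)
    exact this.congr_deriv (by simp)
  have hgg' : ∀ x ∈ Set.Ioo (0:ℝ) 1, HasDerivAt g (2 * x * Real.sinh x + x ^ 2 * Real.cosh x) x := by
    intro x _
    have := (hasDerivAt_pow 2 x).mul (Real.hasDerivAt_sinh x)
    exact this.congr_deriv (by simp)
  have hg' : ∀ x ∈ Set.Ioo (0:ℝ) 1, 2 * x * Real.sinh x + x ^ 2 * Real.cosh x ≠ 0 := by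
    intro x hx
    have h1 : 0 < Real.sinh x := Real.sinh_pos_iff.mpr hx.1
    have h2 : 0 < Real.cosh x := Real.cosh_pos x
    have hx0 := hx.1
    positivity
  have hfa : Tendsto f (nhdsWithin 0 (Set.Ioi 0)) (nhds 0) := by
    apply tendsto_nhdsWithin_of_tendsto_nhds
    have : Continuous f := by continuity
    have h0 := this.tendsto 0
    simpa [f] using h0
  have hga : Tendsto g (nhdsWithin 0 (Set.Ioi 0)) (nhds 0) := by
    apply tendsto_nhdsWithin_of_tendsto_nhds
    have : Continuous g := by continuity
    have h0 := this.tendsto 0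
    simpa [g] using h0
  have hdiv : Tendsto (fun x => x * Real.sinh x / (2 * x * Real.sinh x + x ^ 2 * Real.cosh x))
      (nhdsWithin 0 (Set.Ioi 0)) (nhds (1/3)) := by
    have hc : Tendsto (fun x : ℝ => 2 * (Real.sinh x / x) + Real.cosh x)
        (nhdsWithin 0 (Set.Ioi 0)) (nhds 3) := by
      have hcosh : Tendsto (fun x : ℝ => Real.cosh x) (nhdsWithin 0 (Set.Ioi 0)) (nhds 1) := by
        apply tendsto_nhdsWithin_of_tendsto_nhds
        simpa using Real.continuous_cosh.tendsto 0
      have := ((sinh_div_self_tendsto.const_mul 2).add hcosh)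
      norm_num at this
      exact this
    have h := Tendsto.div sinh_div_self_tendsto hc (by norm_num)
    refine (h.congr' ?_)
    filter_upwards [self_mem_nhdsWithin] with x hx
    have hx0 : (0:ℝ) < x := hx
    have hs : 0 < Real.sinh x := Real.sinh_pos_iff.mpr hx0
    have hd : (0:ℝ) < 2 * x * Real.sinh x + x ^ 2 * Real.cosh x := by
      have := Real.cosh_pos x; positivity
    have hd2 : (0:ℝ) < 2 * (Real.sinh x / x) + Real.cosh x := by
      have := Real.cosh_pos x; positivity
    rw [Pi.div_apply]
    field_simp [ne_of_gt hd, ne_of_gt hd2, ne_of_gt hx0]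
  have := HasDerivAt.lhopital_zero_right_on_Ioo one_pos hff' hgg' hg' hfa hga hdiv
  refine this.congr' ?_
  filter_upwards [self_mem_nhdsWithin] with x hx
  have hx0 : x ≠ 0 := ne_of_gt hx
  have hs : Real.sinh x ≠ 0 := ne_of_gt (Real.sinh_pos_iff.mpr hx)
  show f x / g x = _
  simp only [f, g]
  field_simp

lemma coth_tendsto_one :
    Tendsto (fun x : ℝ => Real.cosh x / Real.sinh x) atTop (nhds 1) := by
  have he : Tendsto (fun x : ℝ => Real.exp (-(2 * x))) atTop (nhds 0) :=
    Real.tendsto_exp_neg_atTop_nhds_zero.comp (tendsto_id.const_mul_atTop two_pos)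
  have h1 : Tendsto (fun x : ℝ => (1 + Real.exp (-(2 * x))) / (1 - Real.exp (-(2 * x))))
      atTop (nhds 1) := by
    have := Tendsto.div ((tendsto_const_nhds (x := (1:ℝ))).add he)
      ((tendsto_const_nhds (x := (1:ℝ))).sub he) (by norm_num)
    norm_num at this
    exact this
  refine h1.congr' ?_
  filter_upwards [eventually_gt_atTop (0:ℝ)] with x hx
  have hex : Real.exp x ≠ 0 := (Real.exp_pos x).ne'
  have hlt : Real.exp (-(2 * x)) < 1 := Real.exp_lt_one_iff.mpr (by linarith)
  have hne : (1:ℝ) - Real.exp (-(2 * x)) ≠ 0 := by linarith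
  have hsh : Real.sinh x ≠ 0 := Real.sinh_pos_iff.mpr hx |>.ne'
  rw [Real.cosh_eq, Real.sinh_eq]
  rw [show (-(2*x)) = -x + -x by ring, Real.exp_add, Real.exp_neg]
  field_simp

section Helpers
variable (h uabs : ℝ)

lemma part1 (hh : 0 < h) (hu : 0 < uabs)
    (coth1 : Tendsto (fun x : ℝ => Real.cosh x / Real.sinh x) atTop (nhds 1)) :
    Tendsto (fun k : ℝ =>
        ((2 * uabs / h) ^ 2 + 9 * (4 * k / h ^ 2) ^ 2) ^ (-(1/2 : ℝ)) /
          ((h / (2 * uabs)) *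
            (Real.cosh (uabs * h / (2 * k)) / Real.sinh (uabs * h / (2 * k))
              - 1 / (uabs * h / (2 * k)))))
      (nhdsWithin 0 (Set.Ioi 0)) (nhds 1) := by
  have hval : ((2 * uabs / h) ^ 2 : ℝ) ^ (-(1/2 : ℝ)) = h / (2 * uabs) := by
    rw [Real.rpow_neg (by positivity), ← Real.sqrt_eq_rpow,
      Real.sqrt_sq (by positivity), inv_div]
  have hbase : Tendsto (fun k : ℝ => (2 * uabs / h) ^ 2 + 9 * (4 * k / h ^ 2) ^ 2)
      (nhdsWithin 0 (Set.Ioi 0)) (nhds ((2 * uabs / h) ^ 2)) := by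
    apply tendsto_nhdsWithin_of_tendsto_nhds
    have hc : Continuous (fun k : ℝ => (2 * uabs / h) ^ 2 + 9 * (4 * k / h ^ 2) ^ 2) := by
      continuity
    have h0 := hc.tendsto 0
    norm_num at h0
    exact h0
  have hN : Tendsto (fun k : ℝ => ((2 * uabs / h) ^ 2 + 9 * (4 * k / h ^ 2) ^ 2) ^ (-(1/2 : ℝ)))
      (nhdsWithin 0 (Set.Ioi 0)) (nhds (h / (2 * uabs))) := by
    have hc := (Real.continuousAt_rpow_const ((2 * uabs / h) ^ 2) (-(1/2 : ℝ))
      (Or.inl (by positivity))).tendsto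
    have := hc.comp hbase
    rwa [hval] at this
  have ha_eq : (fun k : ℝ => uabs * h / (2 * k)) = fun k : ℝ => (uabs * h / 2) * k⁻¹ := by
    funext k
    rw [← div_div, div_eq_mul_inv]
  have ha_top : Tendsto (fun k : ℝ => uabs * h / (2 * k)) (nhdsWithin 0 (Set.Ioi 0)) atTop := by
    rw [ha_eq]
    exact tendsto_inv_nhdsGT_zero.const_mul_atTop (by positivity)
  have hcoth : Tendsto (fun k : ℝ =>
      Real.cosh (uabs * h / (2 * k)) / Real.sinh (uabs * h / (2 * k)))
      (nhdsWithin 0 (Set.Ioi 0)) (nhds 1) := coth1.comp ha_top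
  have hinv : Tendsto (fun k : ℝ => 1 / (uabs * h / (2 * k)))
      (nhdsWithin 0 (Set.Ioi 0)) (nhds 0) := by
    simp only [one_div]
    exact tendsto_inv_atTop_zero.comp ha_top
  have hD : Tendsto (fun k : ℝ => (h / (2 * uabs)) *
      (Real.cosh (uabs * h / (2 * k)) / Real.sinh (uabs * h / (2 * k))
        - 1 / (uabs * h / (2 * k))))
      (nhdsWithin 0 (Set.Ioi 0)) (nhds (h / (2 * uabs))) := by
    have := (hcoth.sub hinv).const_mul (h / (2 * uabs))
    rw [sub_zero, mul_one] at this
    exact this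
  have hne : h / (2 * uabs) ≠ 0 := by positivity
  have := hN.div hD hne
  rwa [div_self hne] at this

end Helpers

lemma part2 (h uabs : ℝ) (hh : 0 < h) (hu : 0 < uabs)
    (key : Tendsto (fun x : ℝ => (Real.cosh x / Real.sinh x - 1 / x) / x)
      (nhdsWithin 0 (Set.Ioi 0)) (nhds (1/3))) :
    Tendsto (fun k : ℝ =>
        ((2 * uabs / h) ^ 2 + 9 * (4 * k / h ^ 2) ^ 2) ^ (-(1/2 : ℝ)) /
          ((h / (2 * uabs)) *
            (Real.cosh (uabs * h / (2 * k)) / Real.sinh (uabs * h / (2 * k))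
              - 1 / (uabs * h / (2 * k)))))
      atTop (nhds 1) := by
  -- A : k * tau_mod  tends to h^2/12
  have hA : Tendsto (fun k : ℝ =>
      k * ((2 * uabs / h) ^ 2 + 9 * (4 * k / h ^ 2) ^ 2) ^ (-(1/2 : ℝ)))
      atTop (nhds (h ^ 2 / 12)) := by
    have htk : Tendsto (fun k : ℝ => (2 * uabs / h) * k⁻¹) atTop (nhds 0) := by
      have := tendsto_inv_atTop_zero.const_mul (2 * uabs / h)
      rwa [mul_zero] at this
    have hbase : Tendsto (fun k : ℝ => ((2 * uabs / h) * k⁻¹) ^ 2 + 9 * (4 / h ^ 2) ^ 2)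
        atTop (nhds (9 * (4 / h ^ 2) ^ 2)) := by
      have := ((htk.pow 2).add (tendsto_const_nhds (x := 9 * (4 / h ^ 2) ^ 2)))
      norm_num at this
      exact this
    have hval : ((9 : ℝ) * (4 / h ^ 2) ^ 2) ^ (-(1/2 : ℝ)) = h ^ 2 / 12 := by
      rw [show (9 : ℝ) * (4 / h ^ 2) ^ 2 = (12 / h ^ 2) ^ 2 by ring,
        Real.rpow_neg (by positivity), ← Real.sqrt_eq_rpow,
        Real.sqrt_sq (by positivity), inv_div]
    have hrp : Tendsto (fun k : ℝ =>
        (((2 * uabs / h) * k⁻¹) ^ 2 + 9 * (4 / h ^ 2) ^ 2) ^ (-(1/2 : ℝ)))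
        atTop (nhds (h ^ 2 / 12)) := by
      have hc := (Real.continuousAt_rpow_const (9 * (4 / h ^ 2) ^ 2) (-(1/2 : ℝ))
        (Or.inl (by positivity))).tendsto
      have := hc.comp hbase
      rwa [hval] at this
    refine hrp.congr' ?_
    filter_upwards [eventually_gt_atTop (0:ℝ)] with k hk
    have hk0 : k ≠ 0 := ne_of_gt hk
    have hb : (0:ℝ) < (2 * uabs / h) ^ 2 + 9 * (4 * k / h ^ 2) ^ 2 := by positivity
    have heq : ((2 * uabs / h) * k⁻¹) ^ 2 + 9 * (4 / h ^ 2) ^ 2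
        = ((2 * uabs / h) ^ 2 + 9 * (4 * k / h ^ 2) ^ 2) / k ^ 2 := by
      field_simp
    rw [heq, Real.div_rpow hb.le (sq_nonneg k), Real.rpow_neg (sq_nonneg k),
      ← Real.sqrt_eq_rpow, Real.sqrt_sq hk.le]
    rw [div_inv_eq_mul, mul_comm]
  -- B : k * tau_opt tends to h^2/12
  have ha0 : Tendsto (fun k : ℝ => uabs * h / (2 * k)) atTop
      (nhdsWithin 0 (Set.Ioi 0)) := by
    rw [tendsto_nhdsWithin_iff]
    constructor
    · have hteq : (fun k : ℝ => uabs * h / (2 * k)) = fun k : ℝ => (uabs * h / 2) * k⁻¹ := by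
        funext k; rw [← div_div, div_eq_mul_inv]
      rw [hteq]
      have := tendsto_inv_atTop_zero.const_mul (uabs * h / 2)
      rwa [mul_zero] at this
    · filter_upwards [eventually_gt_atTop (0:ℝ)] with k hk
      exact Set.mem_Ioi.mpr (by positivity)
  have hkey2 := key.comp ha0
  have hB : Tendsto (fun k : ℝ => k * ((h / (2 * uabs)) *
      (Real.cosh (uabs * h / (2 * k)) / Real.sinh (uabs * h / (2 * k))
        - 1 / (uabs * h / (2 * k)))))
      atTop (nhds (h ^ 2 / 12)) := by
    have hlim := hkey2.const_mul ((h / (2 * uabs)) * (uabs * h / 2))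
    have hval : ((h / (2 * uabs)) * (uabs * h / 2)) * (1/3) = h ^ 2 / 12 := by
      field_simp
      ring
    rw [hval] at hlim
    refine hlim.congr' ?_
    filter_upwards [eventually_gt_atTop (0:ℝ)] with k hk
    have hk0 : k ≠ 0 := ne_of_gt hk
    have ha : uabs * h / (2 * k) ≠ 0 := by positivity
    show ((h / (2 * uabs)) * (uabs * h / 2)) *
        ((Real.cosh (uabs * h / (2 * k)) / Real.sinh (uabs * h / (2 * k))
          - 1 / (uabs * h / (2 * k))) / (uabs * h / (2 * k))) = _
    set E := Real.cosh (uabs * h / (2 * k)) / Real.sinh (uabs * h / (2 * k))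
      - 1 / (uabs * h / (2 * k)) with hE
    field_simp
  have hne : h ^ 2 / 12 ≠ 0 := by positivity
  have hfin := hA.div hB hne
  rw [div_self hne] at hfin
  refine hfin.congr' ?_
  filter_upwards [eventually_gt_atTop (0:ℝ)] with k hk
  exact mul_div_mul_left _ _ (ne_of_gt hk)

/-- With `Pe = |u|h/(2k)`, `τ_opt = (h/(2|u|))(coth Pe − 1/Pe)` and
`τ_mod = [(2|u|/h)² + 9(4k/h²)²]^{-1/2}`, the ratio `τ_mod/τ_opt` tends to `1` both as
`k → 0⁺` (advection-dominated limit) and as `k → ∞` (diffusion-dominated limit). -/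
theorem tau_mod_div_tau_opt_limits (h uabs : ℝ) (hh : 0 < h) (hu : 0 < uabs) :
    Tendsto (fun k : ℝ =>
        ((2 * uabs / h) ^ 2 + 9 * (4 * k / h ^ 2) ^ 2) ^ (-(1/2 : ℝ)) /
          ((h / (2 * uabs)) *
            (Real.cosh (uabs * h / (2 * k)) / Real.sinh (uabs * h / (2 * k))
              - 1 / (uabs * h / (2 * k)))))
      (nhdsWithin 0 (Set.Ioi 0)) (nhds 1) ∧
    Tendsto (fun k : ℝ =>
        ((2 * uabs / h) ^ 2 + 9 * (4 * k / h ^ 2) ^ 2) ^ (-(1/2 : ℝ)) /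
          ((h / (2 * uabs)) *
            (Real.cosh (uabs * h / (2 * k)) / Real.sinh (uabs * h / (2 * k))
              - 1 / (uabs * h / (2 * k)))))
      atTop (nhds 1) :=
  ⟨part1 h uabs hh hu coth_tendsto_one, part2 h uabs hh hu coth_sub_inv_div_tendsto⟩
end

section
/- The Taylor expansion coth(x) − 1/x = x/3 − x³/45 + O(x⁵) holds near 0; in particular coth(x) − 1/x ≤ x/3 for all x > 0. -/
open Filter Asymptotics

/-!
Over the common denominator, `coth x - 1/x - (x/3 - x³/45) = N x / (45 x sinh x)` with
`N x = 45 x cosh x - (45 + 15 x² - x⁴) sinh x`. The degree-7 Taylor bounds for `sinh` and `cosh`,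
obtained from those of `exp`, give `N x = O(x⁷)`, while `x sinh x ≥ x²`.

The inequality says `x² sinh x - 3 (x cosh x - sinh x) ≥ 0` for `x ≥ 0`: this function vanishes at
`0` and has derivative `x (x cosh x - sinh x)`, whose second factor vanishes at `0` and has
derivative `x sinh x ≥ 0`.
-/

open Real Set Topology

theorem Real.exp_sub_sum_range_isBigO {n : ℕ} (hn : 0 < n) :
    (fun x => exp x - ∑ m ∈ Finset.range n, x ^ m / m.factorial) =O[𝓝 0] (· ^ n) := by
  refine isBigO_iff.2 ⟨n.succ / (n.factorial * n), ?_⟩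
  filter_upwards [Metric.closedBall_mem_nhds (0 : ℝ) one_pos] with x hx
  rw [Metric.mem_closedBall, dist_zero_right] at hx
  simpa [norm_pow, mul_comm] using Real.exp_bound hx hn

theorem Real.exp_neg_sub_sum_range_isBigO {n : ℕ} (hn : 0 < n) :
    (fun x => exp (-x) - ∑ m ∈ Finset.range n, (-x) ^ m / m.factorial) =O[𝓝 0] (· ^ n) := by
  refine ((exp_sub_sum_range_isBigO hn).comp_tendsto
    (continuous_neg.tendsto' 0 0 neg_zero)).trans (isBigO_of_le _ fun x => ?_)
  simp [norm_pow]

theorem Real.sinh_sub_taylor_isBigO :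
    (fun x => sinh x - (x + x ^ 3 / 6 + x ^ 5 / 120)) =O[𝓝 0] (· ^ 7) := by
  have h := ((exp_sub_sum_range_isBigO (n := 7) (by norm_num)).sub
    (exp_neg_sub_sum_range_isBigO (n := 7) (by norm_num))).const_mul_left (1 / 2)
  refine h.congr_left fun x => ?_
  simp only [Finset.sum_range_succ, Finset.sum_range_zero, Nat.factorial, sinh_eq]
  push_cast
  ring

theorem Real.cosh_sub_taylor_isBigO :
    (fun x => cosh x - (1 + x ^ 2 / 2 + x ^ 4 / 24 + x ^ 6 / 720)) =O[𝓝 0] (· ^ 7) := by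
  have h := ((exp_sub_sum_range_isBigO (n := 7) (by norm_num)).add
    (exp_neg_sub_sum_range_isBigO (n := 7) (by norm_num))).const_mul_left (1 / 2)
  refine h.congr_left fun x => ?_
  simp only [Finset.sum_range_succ, Finset.sum_range_zero, Nat.factorial, cosh_eq]
  push_cast
  ring

theorem Real.coth_numerator_isBigO :
    (fun x => 45 * x * cosh x - (45 + 15 * x ^ 2 - x ^ 4) * sinh x) =O[𝓝 0] (· ^ 7) := by
  have hx : (fun x : ℝ => 45 * x) =O[𝓝 0] (fun _ => (1 : ℝ)) :=
    ((continuous_const.mul continuous_id).tendsto 0).isBigO_one ℝ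
  have hq : (fun x : ℝ => 45 + 15 * x ^ 2 - x ^ 4) =O[𝓝 0] (fun _ => (1 : ℝ)) :=
    ((by fun_prop : Continuous fun x : ℝ => 45 + 15 * x ^ 2 - x ^ 4).tendsto 0).isBigO_one ℝ
  have hpoly : (fun x : ℝ => 5 / 48 * x ^ 7 + 1 / 120 * x ^ 9) =O[𝓝 0] (· ^ 7) :=
    ((isBigO_refl _ _).const_mul_left _).add
      ((isLittleO_pow_pow (by norm_num : 7 < 9)).isBigO.const_mul_left _)
  have h := (hx.mul cosh_sub_taylor_isBigO).sub (hq.mul sinh_sub_taylor_isBigO)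
  simp only [one_mul] at h
  refine (h.add hpoly).congr_left fun x => ?_
  ring

theorem Real.sq_le_mul_sinh (x : ℝ) : x ^ 2 ≤ x * sinh x := by
  rcases le_total 0 x with hx | hx
  · nlinarith [self_le_sinh_iff.2 hx]
  · nlinarith [sinh_le_self_iff.2 hx]

theorem Real.inv_mul_sinh_isBigO :
    (fun x => (x * sinh x)⁻¹) =O[𝓝 0] (fun x => (x ^ 2)⁻¹) := by
  refine isBigO_of_le _ fun x => ?_
  rcases eq_or_ne x 0 with rfl | hx
  · simp
  have hsq := sq_le_mul_sinh x
  rw [norm_inv, norm_inv, Real.norm_of_nonneg (by nlinarith : 0 ≤ x * sinh x),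
    Real.norm_of_nonneg (sq_nonneg x)]
  exact inv_anti₀ (by positivity) hsq

theorem Real.cosh_div_sinh_sub_inv_sub_eq (x : ℝ) :
    cosh x / sinh x - 1 / x - (x / 3 - x ^ 3 / 45) =
      (45 * x * cosh x - (45 + 15 * x ^ 2 - x ^ 4) * sinh x) * (45⁻¹ * (x * sinh x)⁻¹) := by
  rcases eq_or_ne x 0 with rfl | hx
  · simp
  have := sinh_ne_zero.2 hx
  field_simp
  ring

theorem monotoneOn_Ici_of_hasDerivAt_nonneg {f f' : ℝ → ℝ} {a : ℝ}
    (hf : ∀ y, HasDerivAt f (f' y) y) (hf' : ∀ y, a < y → 0 ≤ f' y) :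
    MonotoneOn f (Ici a) :=
  monotoneOn_of_hasDerivWithinAt_nonneg (convex_Ici a)
    (fun y _ => (hf y).continuousAt.continuousWithinAt)
    (fun y _ => (hf y).hasDerivWithinAt) (by simpa using hf')

theorem Real.sinh_le_mul_cosh {x : ℝ} (hx : 0 ≤ x) : sinh x ≤ x * cosh x := by
  have hmono : MonotoneOn (fun x => x * cosh x - sinh x) (Ici 0) :=
    monotoneOn_Ici_of_hasDerivAt_nonneg (f' := fun y => y * sinh y)
      (fun y => (((hasDerivAt_id' y).mul (hasDerivAt_cosh y)).sub
        (hasDerivAt_sinh y)).congr_deriv (by ring))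
      (fun y hy => mul_nonneg hy.le (sinh_nonneg_iff.2 hy.le))
  simpa using hmono self_mem_Ici hx hx

theorem Real.mul_cosh_sub_sinh_le {x : ℝ} (hx : 0 ≤ x) :
    3 * (x * cosh x - sinh x) ≤ x ^ 2 * sinh x := by
  have hmono : MonotoneOn (fun x => x ^ 2 * sinh x - 3 * (x * cosh x - sinh x)) (Ici 0) :=
    monotoneOn_Ici_of_hasDerivAt_nonneg (f' := fun y => y * (y * cosh y - sinh y))
      (fun y => (((hasDerivAt_pow 2 y).mul (hasDerivAt_sinh y)).sub
        ((((hasDerivAt_id' y).mul (hasDerivAt_cosh y)).sub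
          (hasDerivAt_sinh y)).const_mul 3)).congr_deriv (by push_cast; ring))
      (fun y hy => mul_nonneg hy.le (by linarith [sinh_le_mul_cosh hy.le]))
  simpa using hmono self_mem_Ici hx hx

theorem Real.cosh_div_sinh_sub_inv_le {x : ℝ} (hx : 0 < x) :
    cosh x / sinh x - 1 / x ≤ x / 3 := by
  have hs : 0 < sinh x := sinh_pos_iff.2 hx
  rw [div_sub_div _ _ hs.ne' hx.ne', div_le_div_iff₀ (by positivity) three_pos]
  linear_combination mul_cosh_sub_sinh_le hx.le

/-- Taylor expansion `coth x − 1/x = x/3 − x³/45 + O(x⁵)` near `0`; in particular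
`coth x − 1/x ≤ x/3` for all `x > 0`. -/
theorem coth_sub_inv_taylor_and_bound :
    (fun x : ℝ => Real.cosh x / Real.sinh x - 1 / x - (x / 3 - x ^ 3 / 45))
        =O[nhds 0] (fun x : ℝ => x ^ 5) ∧
      ∀ x : ℝ, 0 < x → Real.cosh x / Real.sinh x - 1 / x ≤ x / 3 := by
  refine ⟨?_, fun x hx => cosh_div_sinh_sub_inv_le hx⟩
  have h := coth_numerator_isBigO.mul (inv_mul_sinh_isBigO.const_mul_left 45⁻¹)
  refine h.congr (fun x => (cosh_div_sinh_sub_inv_sub_eq x).symm) fun x => ?_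
  rcases eq_or_ne x 0 with rfl | hx
  · simp
  field_simp
end
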